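/- arXiv:1801.06338 — 4 statements merged into one kernel-verified Lean document; each statement's English description precedes it below -/
import Mathlib

section
/- Let f : {0,1}^L → {0,1} depend on all L coordinates (for every i ∈ [L] there exist inputs y, z differing only in coordinate i with f(y) ≠ f(z)). Let n, k satisfy L ≤ k ≤ n − L, and define g on the slice {x ∈ {0,1}^n : Σx_i = k} by g(x) = f(x_1, …, x_L). Then g is not an (L−1)-junta: there is no set S ⊆ [n] of size at most L−1 and function h : {0,1}^S → {0,1} with g(x) = h(x|_S) for all x in the slice. -/
/-!
Since `#S < L ≤ n - L`, some coordinate `i < L` and some coordinate `j ≥ L` both lie outside `S`,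
so any `S`-junta on the slice is invariant under swapping the coordinates `i` and `j`. As `f`
depends on `i`, there is `w` with `f (w[i := 0]) ≠ f (w[i := 1])`; extend `w[i := 0]` to a point
`x` of the slice with `x j = 1` (possible because `L ≤ k ≤ n - L`). Swapping `i` and `j` in `x`
changes the value of `g` but not that of the junta.
-/

/-- Hamming weight of a Boolean vector. -/
def wt {n : ℕ} (x : Fin n → Bool) : ℕ :=
  (Finset.univ.filter fun t => x t = true).card

open Finset Function

lemma wt_comp_perm {n : ℕ} (x : Fin n → Bool) (σ : Equiv.Perm (Fin n)) : wt (x ∘ σ) = wt x := by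
  simp only [wt, card_filter, comp_apply]
  exact Equiv.sum_comp σ fun t => if x t = true then 1 else 0

lemma wt_indicator {n : ℕ} (Q : Finset (Fin n)) : wt (fun t => decide (t ∈ Q)) = #Q := by
  simp [wt]

lemma wt_lt_of_eq_false {L : ℕ} {a : Fin L → Bool} {i : Fin L} (hi : a i = false) : wt a < L := by
  calc wt a < #(univ : Finset (Fin L)) :=
        card_lt_card (filter_ssubset.mpr ⟨i, mem_univ i, by simp [hi]⟩)
    _ = L := card_fin L

lemma exists_update_ne_of_ne {ι : Type*} [DecidableEq ι] {f : (ι → Bool) → Bool} {i : ι}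
    {y z : ι → Bool} (hyz : ∀ t, t ≠ i → y t = z t) (hf : f y ≠ f z) :
    ∃ w, f (update w i false) ≠ f (update w i true) := by
  have hz : z = update y i (z i) := by
    ext t
    by_cases ht : t = i
    · subst ht; simp
    · simp [ht, hyz t ht]
  refine ⟨y, ?_⟩
  rw [hz] at hf
  nth_rw 1 [← update_eq_self i y] at hf
  revert hf
  generalize y i = b
  generalize z i = c
  cases b <;> cases c <;> simp [eq_comm]

lemma exists_wt_eq_extension {n L k : ℕ} (hLn : L ≤ n) (a : Fin L → Bool) {j : Fin n}
    (hj : L ≤ j.val) (hk₁ : wt a < k) (hk₂ : k ≤ wt a + (n - L)) :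
    ∃ x : Fin n → Bool, wt x = k ∧ (∀ t, x (Fin.castLE hLn t) = a t) ∧ x j = true := by
  set high := Ici (⟨L, lt_of_le_of_lt hj j.isLt⟩ : Fin n)
  have hhigh : ∀ s, s ∈ high ↔ L ≤ s.val := fun s => by simp [high, Fin.le_def]
  set A := (univ.filter fun t => a t = true).map (Fin.castLEEmb hLn)
  have hA : #A = wt a := card_map _
  have hAlow : ∀ s ∈ A, s.val < L := by
    simp only [A, mem_map, mem_filter, mem_univ, true_and]
    rintro _ ⟨t, -, rfl⟩
    exact t.isLt
  have hjA : j ∉ A := fun h => (hAlow j h).not_ge hj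
  have hdisj : Disjoint A high :=
    disjoint_left.mpr fun s hs hs' => (hAlow s hs).not_ge ((hhigh s).mp hs')
  obtain ⟨Q, hPQ, hQU, hQ⟩ := exists_subsuperset_card_eq (n := k)
    (insert_subset (mem_union_right _ ((hhigh j).mpr hj)) subset_union_left)
    (by rw [card_insert_of_notMem hjA, hA]; omega)
    (by rw [card_union_of_disjoint hdisj, Fin.card_Ici, hA]; omega)
  refine ⟨fun s => decide (s ∈ Q), by rw [wt_indicator, hQ], fun t => ?_,
    by simp [hPQ (mem_insert_self j A)]⟩
  have hmem : Fin.castLE hLn t ∈ A ↔ a t = true := by simp [A]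
  rcases Bool.eq_false_or_eq_true (a t) with ht | ht
  · simpa [ht] using hPQ (mem_insert_of_mem (hmem.mpr ht))
  · simp only [ht, decide_eq_false_iff_not]
    intro hQt
    rcases mem_union.mp (hQU hQt) with h | h
    · simp_all
    · exact (t.isLt.not_ge ((hhigh _).mp h))

lemma eq_comp_swap_of_notMem {n k : ℕ} {S : Finset (Fin n)} {g : (Fin n → Bool) → Bool}
    {h : (S → Bool) → Bool} (hg : ∀ x, wt x = k → g x = h fun s => x s.1) {a b : Fin n}
    (ha : a ∉ S) (hb : b ∉ S) {x : Fin n → Bool} (hx : wt x = k) :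
    g (x ∘ Equiv.swap a b) = g x := by
  rw [hg x hx, hg _ ((wt_comp_perm x _).trans hx)]
  congr 1
  ext ⟨s, hs⟩
  simp [Equiv.swap_apply_of_ne_of_ne (ne_of_mem_of_not_mem hs ha) (ne_of_mem_of_not_mem hs hb)]

lemma comp_swap_castLE {n L : ℕ} (hLn : L ≤ n) {a : Fin L → Bool} {x : Fin n → Bool}
    (hxa : ∀ t, x (Fin.castLE hLn t) = a t) {j : Fin n} (hj : L ≤ j.val) (hxj : x j = true)
    (i t : Fin L) :
    (x ∘ Equiv.swap (Fin.castLE hLn i) j) (Fin.castLE hLn t) = update a i true t := by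
  by_cases hti : t = i
  · subst hti; simp [hxj]
  · have hj' : Fin.castLE hLn t ≠ j := fun h => by have := congrArg Fin.val h; simp at this; omega
    rw [comp_apply, Equiv.swap_apply_of_ne_of_ne ((Fin.castLE_injective hLn).ne hti) hj', hxa,
      update_of_ne hti]

theorem stmt2 (n k L : ℕ) (hLk : L ≤ k) (hkn : k ≤ n - L)
    (f : (Fin L → Bool) → Bool)
    (hdep : ∀ i : Fin L, ∃ y z : Fin L → Bool,
      (∀ t, t ≠ i → y t = z t) ∧ f y ≠ f z) :
    ¬ ∃ (S : Finset (Fin n)) (h : (S → Bool) → Bool), S.card < L ∧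
      ∀ x : Fin n → Bool, wt x = k →
        f (fun i => x (Fin.castLE (le_trans hLk (le_trans hkn (Nat.sub_le n L))) i))
          = h (fun i => x i.1) := by
  rintro ⟨S, h, hS, hg⟩
  set hLn := le_trans hLk (le_trans hkn (Nat.sub_le n L))
  obtain ⟨_, hi, hiS⟩ := exists_mem_notMem_of_card_lt_card (s := S)
    (t := univ.map (Fin.castLEEmb hLn)) (by rwa [card_map, card_fin])
  obtain ⟨i, -, rfl⟩ := mem_map.mp hi
  obtain ⟨j, hj, hjS⟩ := exists_mem_notMem_of_card_lt_card (s := S)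
    (t := Ici (⟨L, by omega⟩ : Fin n)) (by rw [Fin.card_Ici, Fin.val_mk]; omega)
  replace hj : L ≤ j.val := by simpa [Fin.le_def] using hj
  obtain ⟨y, z, hyz, hf⟩ := hdep i
  obtain ⟨w, hw⟩ := exists_update_ne_of_ne hyz hf
  have hwt := wt_lt_of_eq_false (update_self i false w)
  obtain ⟨x, hxk, hxa, hxj⟩ :=
    exists_wt_eq_extension hLn (update w i false) hj (k := k) (by omega) (by omega)
  apply hw
  calc f (update w i false) = f fun t => x (Fin.castLE hLn t) := by simp only [hxa]
    _ = f fun t => (x ∘ Equiv.swap (Fin.castLE hLn i) j) (Fin.castLE hLn t) :=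
      (eq_comp_swap_of_notMem (g := fun x => f fun t => x (Fin.castLE hLn t)) hg hiS hjS hxk).symm
    _ = f (update w i true) := by simp only [comp_swap_castLE hLn hxa hj hxj, update_idem]
end

section
/- Let P be a polynomial over the reals in variables x_{L+1}, …, x_n of degree at most d that is symmetric under all permutations of these variables and takes, on each point of {0,1}^{n−L}, a value depending only on the sum of coordinates. Then there exists a univariate real polynomial R of degree at most d such that P(x) = R(x_{L+1} + ⋯ + x_n) for all x ∈ {0,1}^{n−L}. -/
open Finset MvPolynomial Polynomial fwdDiff

theorem stmt4 (m d : ℕ) (P : MvPolynomial (Fin m) ℝ)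
    (hdeg : P.totalDegree ≤ d)
    (hsym : ∀ σ : Equiv.Perm (Fin m), MvPolynomial.rename σ P = P)
    (hval : ∀ x y : Fin m → Bool,
      (Finset.univ.filter fun t => x t = true).card
        = (Finset.univ.filter fun t => y t = true).card →
      MvPolynomial.eval (fun i => if x i then (1:ℝ) else 0) P
        = MvPolynomial.eval (fun i => if y i then (1:ℝ) else 0) P) :
    ∃ R : Polynomial ℝ, R.natDegree ≤ d ∧ ∀ x : Fin m → Bool,
      MvPolynomial.eval (fun i => if x i then (1:ℝ) else 0) P
        = R.eval (∑ i, if x i then (1:ℝ) else 0) := by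
  classical
  set e : Finset (Fin m) → ℝ :=
    fun T => MvPolynomial.eval (fun i => if i ∈ T then (1:ℝ) else 0) P with he
  have heval : ∀ x : Fin m → Bool,
      MvPolynomial.eval (fun i => if x i then (1:ℝ) else 0) P
        = e (Finset.univ.filter fun i => x i = true) := by
    intro x
    rw [he]
    have : (fun i => if x i then (1:ℝ) else 0)
        = (fun i => if i ∈ Finset.univ.filter (fun i => x i = true) then (1:ℝ) else 0) := by
      funext i; simp
    rw [this]
  have hecard : ∀ T T' : Finset (Fin m), T.card = T'.card → e T = e T' := by
    intro T T' h
    have h1 : (Finset.univ.filter fun t => (decide ((t : Fin m) ∈ T)) = true) = T := by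
      ext i; simp
    have h2 : (Finset.univ.filter fun t => (decide ((t : Fin m) ∈ T')) = true) = T' := by
      ext i; simp
    have h3 := hval (fun i => decide (i ∈ T)) (fun i => decide (i ∈ T'))
      (by rw [h1, h2, h])
    have e1 := heval (fun i => decide (i ∈ T))
    have e2 := heval (fun i => decide (i ∈ T'))
    rw [h1] at e1
    rw [h2] at e2
    rw [← e1, ← e2]
    exact h3
  -- monomial evaluation on indicator vectors
  have hmono : ∀ (T : Finset (Fin m)) (s : Fin m →₀ ℕ),
      (∏ i ∈ s.support, (if i ∈ T then (1:ℝ) else 0) ^ s i)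
        = if s.support ⊆ T then 1 else 0 := by
    intro T s
    by_cases hsub : s.support ⊆ T
    · rw [if_pos hsub]
      apply Finset.prod_eq_one
      intro i hi
      rw [if_pos (hsub hi), one_pow]
    · rw [if_neg hsub]
      obtain ⟨i, hi, hiT⟩ := Finset.not_subset.mp hsub
      exact Finset.prod_eq_zero hi
        (by rw [if_neg hiT, zero_pow (Finsupp.mem_support_iff.mp hi)])
  have heT : ∀ T : Finset (Fin m),
      e T = ∑ s ∈ P.support, P.coeff s * (if s.support ⊆ T then 1 else 0) := by
    intro T
    simp only [he]
    rw [MvPolynomial.eval_eq]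
    exact Finset.sum_congr rfl fun s _ => by rw [hmono]
  have hsupp : ∀ s ∈ P.support, s.support.card ≤ d := by
    intro s hs
    calc s.support.card = ∑ _i ∈ s.support, 1 := by simp
      _ ≤ ∑ i ∈ s.support, s i :=
        Finset.sum_le_sum fun i hi =>
          Nat.one_le_iff_ne_zero.mpr (Finsupp.mem_support_iff.mp hi)
      _ ≤ P.totalDegree := MvPolynomial.le_totalDegree hs
      _ ≤ d := hdeg
  have hsign : ∀ n k : ℕ, k ≤ n → (-1:ℝ)^(n-k) = (-1)^n * (-1)^k := by
    intro n k hk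
    have h1 : (-1:ℝ)^n = (-1)^(n-k) * (-1)^k := by
      rw [← pow_add, Nat.sub_add_cancel hk]
    rw [h1, mul_assoc, ← pow_add, ← two_mul, pow_mul, neg_one_sq, one_pow, mul_one]
  have halt : ∀ (S : Finset (Fin m)), S.Nonempty →
      (∑ U ∈ S.powerset, (-1:ℝ)^(S.card - U.card)) = 0 := by
    intro S hS
    have hstep : ∀ U ∈ S.powerset, (-1:ℝ)^(S.card - U.card) = (-1)^S.card * (-1)^U.card :=
      fun U hU => hsign _ _ (Finset.card_le_card (Finset.mem_powerset.mp hU))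
    rw [Finset.sum_congr rfl hstep, ← Finset.mul_sum]
    have hz : (∑ U ∈ S.powerset, (-1:ℝ)^U.card)
        = ((∑ U ∈ S.powerset, (-1:ℤ)^U.card : ℤ) : ℝ) := by push_cast; rfl
    rw [hz, Finset.sum_powerset_neg_one_pow_card, if_neg hS.ne_empty]
    simp
  have L1 : ∀ A : Finset (Fin m), d < A.card →
      (∑ T ∈ A.powerset, (-1:ℝ)^(A.card - T.card) * e T) = 0 := by
    intro A hA
    have hrw : ∀ T ∈ A.powerset, (-1:ℝ)^(A.card - T.card) * e T
        = ∑ s ∈ P.support,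
            P.coeff s * ((-1:ℝ)^(A.card - T.card) * if s.support ⊆ T then 1 else 0) := by
      intro T _
      rw [heT, Finset.mul_sum]
      exact Finset.sum_congr rfl fun s _ => by ring
    rw [Finset.sum_congr rfl hrw, Finset.sum_comm]
    apply Finset.sum_eq_zero
    intro s hs
    rw [← Finset.mul_sum]
    suffices h : (∑ T ∈ A.powerset,
        (-1:ℝ)^(A.card - T.card) * if s.support ⊆ T then 1 else 0) = 0 by
      rw [h, mul_zero]
    by_cases hBA : s.support ⊆ A
    · set B := s.support with hB
      have hcard : B.card < A.card := lt_of_le_of_lt (hsupp s hs) hA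
      have hrw2 : ∀ T ∈ A.powerset,
          ((-1:ℝ)^(A.card - T.card) * if B ⊆ T then 1 else 0)
            = if B ⊆ T then (-1:ℝ)^(A.card - T.card) else 0 := by
        intro T _; split <;> simp
      rw [Finset.sum_congr rfl hrw2, ← Finset.sum_filter]
      have hbij : (∑ T ∈ A.powerset.filter (fun T => B ⊆ T), (-1:ℝ)^(A.card - T.card))
          = ∑ U ∈ (A \ B).powerset, (-1:ℝ)^((A \ B).card - U.card) := by
        apply Finset.sum_nbij' (fun T => T \ B) (fun U => B ∪ U)
        · intro T hT
          simp only [Finset.mem_filter, Finset.mem_powerset] at hT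
          exact Finset.mem_powerset.mpr (Finset.sdiff_subset_sdiff hT.1 le_rfl)
        · intro U hU
          simp only [Finset.mem_powerset] at hU
          simp only [Finset.mem_filter, Finset.mem_powerset]
          exact ⟨Finset.union_subset hBA (hU.trans Finset.sdiff_subset),
            Finset.subset_union_left⟩
        · intro T hT
          simp only [Finset.mem_filter, Finset.mem_powerset] at hT
          exact Finset.union_sdiff_of_subset hT.2
        · intro U hU
          simp only [Finset.mem_powerset] at hU
          exact Finset.union_sdiff_cancel_left
            (Finset.disjoint_of_subset_right hU Finset.disjoint_sdiff)
        · intro T hT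
          simp only [Finset.mem_filter, Finset.mem_powerset] at hT
          congr 1
          have h1 : B.card ≤ T.card := Finset.card_le_card hT.2
          have h2 : T.card ≤ A.card := Finset.card_le_card hT.1
          rw [Finset.card_sdiff_of_subset hBA, Finset.card_sdiff_of_subset hT.2]
          omega
      rw [hbij]
      apply halt
      rw [← Finset.card_pos, Finset.card_sdiff_of_subset hBA]
      omega
    · apply Finset.sum_eq_zero
      intro T hT
      rw [if_neg (fun hsub => hBA (hsub.trans (Finset.mem_powerset.mp hT))), mul_zero]
  -- the univariate function on Hamming weights
  have hAfin : ∀ k : ℕ, ∀ x ∈ Finset.range (min k m), x < m :=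
    fun k x hx => lt_of_lt_of_le (Finset.mem_range.mp hx) (min_le_right k m)
  set g : ℕ → ℝ := fun k => e (Finset.attachFin (Finset.range (min k m)) (hAfin k)) with hg
  have hgcard : ∀ k, (Finset.attachFin (Finset.range (min k m)) (hAfin k)).card = min k m := by
    intro k; rw [Finset.card_attachFin, Finset.card_range]
  have hgT : ∀ T : Finset (Fin m), e T = g T.card := by
    intro T
    apply hecard
    rw [hgcard]
    have : T.card ≤ m := by
      simpa using Finset.card_le_card (Finset.subset_univ T)
    omega
  have L2 : ∀ j, d < j → j ≤ m → (fwdDiff 1)^[j] g 0 = 0 := by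
    intro j hdj hjm
    set A := Finset.attachFin (Finset.range (min j m)) (hAfin j) with hA
    have hAcard : A.card = j := by rw [hgcard]; omega
    have h0 := L1 A (by omega)
    rw [Finset.sum_powerset] at h0
    have hinner : ∀ i ∈ Finset.range (A.card + 1),
        (∑ T ∈ Finset.powersetCard i A, (-1:ℝ)^(A.card - T.card) * e T)
          = (A.card.choose i : ℝ) * ((-1:ℝ)^(j - i) * g i) := by
      intro i _
      have hterm : ∀ T ∈ Finset.powersetCard i A,
          (-1:ℝ)^(A.card - T.card) * e T = (-1:ℝ)^(j - i) * g i := by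
        intro T hT
        obtain ⟨_, hTc⟩ := Finset.mem_powersetCard.mp hT
        rw [hgT T, hTc, hAcard]
      rw [Finset.sum_congr rfl hterm, Finset.sum_const, Finset.card_powersetCard,
        nsmul_eq_mul]
    rw [Finset.sum_congr rfl hinner] at h0
    rw [fwdDiff_iter_eq_sum_shift]
    rw [hAcard] at h0
    rw [← h0]
    apply Finset.sum_congr rfl
    intro i _
    push_cast
    simp only [smul_eq_mul, mul_one, zero_add, zsmul_eq_mul]
    push_cast
    ring
  -- the univariate polynomial
  refine ⟨∑ j ∈ Finset.range (d+1),
      Polynomial.C (((fwdDiff 1)^[j] g 0) / (j.factorial : ℝ)) * descPochhammer ℝ j, ?_, ?_⟩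
  · apply Polynomial.natDegree_sum_le_of_forall_le
    intro j hj
    refine le_trans (Polynomial.natDegree_C_mul_le _ _) ?_
    rw [descPochhammer_natDegree]
    exact Nat.lt_succ_iff.mp (Finset.mem_range.mp hj)
  · intro x
    set k := (Finset.univ.filter fun t => x t = true).card with hk
    have hkm : k ≤ m := by
      rw [hk]
      calc (Finset.univ.filter fun t => x t = true).card
          ≤ (Finset.univ : Finset (Fin m)).card := Finset.card_filter_le _ _
        _ = m := by simp
    have hsum : (∑ i, if x i then (1:ℝ) else 0) = (k : ℝ) := by
      rw [hk, Finset.sum_boole]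
    rw [heval x, hgT, ← hk, hsum]
    have hRe : Polynomial.eval ((k:ℝ))
        (∑ j ∈ Finset.range (d+1),
          Polynomial.C (((fwdDiff 1)^[j] g 0) / (j.factorial : ℝ)) * descPochhammer ℝ j)
        = ∑ j ∈ Finset.range (d+1), ((fwdDiff 1)^[j] g 0) * (k.choose j : ℝ) := by
      rw [Polynomial.eval_finset_sum]
      refine Finset.sum_congr rfl fun j _ => ?_
      rw [Polynomial.eval_mul, Polynomial.eval_C, descPochhammer_eval_eq_descFactorial,
        Nat.descFactorial_eq_factorial_mul_choose]
      have hj0 : (j.factorial : ℝ) ≠ 0 := Nat.cast_ne_zero.mpr j.factorial_ne_zero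
      push_cast
      field_simp
    rw [hRe]
    have hN : g k = ∑ j ∈ Finset.range (k+1), (k.choose j : ℝ) * ((fwdDiff 1)^[j] g 0) := by
      have h1 := shift_eq_sum_fwdDiff_iter 1 g k 0
      simp only [smul_eq_mul, mul_one, zero_add, nsmul_eq_mul] at h1
      exact h1
    rw [hN]
    set N := max d k with hNdef
    have hext1 : (∑ j ∈ Finset.range (k+1), (k.choose j : ℝ) * ((fwdDiff 1)^[j] g 0))
        = ∑ j ∈ Finset.range (N+1), (k.choose j : ℝ) * ((fwdDiff 1)^[j] g 0) := by
      apply Finset.sum_subset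
      · exact Finset.range_subset_range.mpr (by omega)
      · intro j hj hj'
        simp only [Finset.mem_range] at hj hj'
        rw [Nat.choose_eq_zero_of_lt (by omega), Nat.cast_zero, zero_mul]
    have hext2 : (∑ j ∈ Finset.range (d+1), ((fwdDiff 1)^[j] g 0) * (k.choose j : ℝ))
        = ∑ j ∈ Finset.range (N+1), ((fwdDiff 1)^[j] g 0) * (k.choose j : ℝ) := by
      apply Finset.sum_subset
      · exact Finset.range_subset_range.mpr (by omega)
      · intro j hj hj'
        simp only [Finset.mem_range] at hj hj'
        have hdj : d < j := by omega
        have hjk : j ≤ k := by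
          by_contra hc
          exact absurd (Nat.lt_succ_iff.mp hj) (not_le.mpr (max_lt hdj (not_le.mp hc)))
        rw [L2 j hdj (hjk.trans hkm), zero_mul]
    rw [hext1, hext2]
    exact Finset.sum_congr rfl fun j _ => mul_comm _ _
end

section
/- Define the univariate polynomial P_d(σ) = Σ_{e=0}^{d} (−1)^e · C(σ, e), where C(σ, e) is the binomial coefficient polynomial σ(σ−1)⋯(σ−e+1)/e!. Then P_d has degree exactly d and for every integer σ with 0 ≤ σ ≤ 2⌈(d+1)/2⌉ − 1, P_d(σ) ∈ {0, 1}. -/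
/-- The binomial coefficient polynomial `C(σ, e) = σ(σ−1)⋯(σ−e+1)/e!` in a real variable. -/
noncomputable def choosePoly (e : ℕ) : Polynomial ℝ :=
  ((Nat.factorial e : ℝ))⁻¹ • ∏ t ∈ Finset.range e, (Polynomial.X - Polynomial.C (t : ℝ))

/-- `P_d(σ) = Σ_{e=0}^{d} (−1)^e C(σ, e)`. -/
noncomputable def Pd (d : ℕ) : Polynomial ℝ :=
  ∑ e ∈ Finset.range (d + 1), ((-1 : ℝ) ^ e) • choosePoly e

/-!
At a natural number `n + 1`, the partial alternating sum `Σ_{e ≤ d} (-1)^e C(n+1, e)` telescopes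
(Pascal's rule) to `(-1)^d C(n, d)`; in the stated range either `n < d`, where this vanishes, or
`n = d` with `d` even, where it is `1`. The degree is that of the last summand `(-1)^d C(σ, d)`.
-/

open Polynomial Finset

theorem prod_range_X_sub_C_eq_descPochhammer (R : Type*) [CommRing R] (e : ℕ) :
    ∏ t ∈ range e, (X - C (t : R)) = descPochhammer R e := by
  induction e with
  | zero => simp
  | succ e ih => rw [prod_range_succ, ih, descPochhammer_succ_right, C_eq_natCast]

theorem choosePoly_eq_smul_descPochhammer (e : ℕ) :
    choosePoly e = ((e.factorial : ℝ))⁻¹ • descPochhammer ℝ e := by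
  rw [choosePoly, prod_range_X_sub_C_eq_descPochhammer]

theorem natDegree_choosePoly (e : ℕ) : (choosePoly e).natDegree = e := by
  rw [choosePoly_eq_smul_descPochhammer, natDegree_smul _ (by positivity),
    descPochhammer_natDegree]

theorem choosePoly_eval_natCast (e m : ℕ) : (choosePoly e).eval (m : ℝ) = m.choose e := by
  rw [choosePoly_eq_smul_descPochhammer, eval_smul, smul_eq_mul,
    descPochhammer_eval_eq_descFactorial, Nat.descFactorial_eq_factorial_mul_choose, Nat.cast_mul,
    inv_mul_cancel_left₀ (by positivity)]

theorem Pd_succ (d : ℕ) : Pd (d + 1) = Pd d + (-1 : ℝ) ^ (d + 1) • choosePoly (d + 1) :=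
  sum_range_succ _ _

theorem natDegree_Pd (d : ℕ) : (Pd d).natDegree = d := by
  induction d with
  | zero => simp [Pd, choosePoly]
  | succ d ih =>
    have hlast : ((-1 : ℝ) ^ (d + 1) • choosePoly (d + 1)).natDegree = d + 1 := by
      rw [natDegree_smul _ (by simp), natDegree_choosePoly]
    rw [Pd_succ, natDegree_add_eq_right_of_natDegree_lt (by omega), hlast]

theorem Pd_eval_natCast (d m : ℕ) :
    (Pd d).eval (m : ℝ) = ∑ e ∈ range (d + 1), (-1 : ℝ) ^ e * m.choose e := by
  simp only [Pd, eval_finsetSum, eval_smul, smul_eq_mul, choosePoly_eval_natCast]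

theorem Pd_eval_zero (d : ℕ) : (Pd d).eval 0 = 1 := by
  simpa [sum_range_succ'] using Pd_eval_natCast d 0

theorem Pd_eval_natCast_add_one (d n : ℕ) :
    (Pd d).eval ((n + 1 : ℕ) : ℝ) = (-1 : ℝ) ^ d * n.choose d := by
  rw [Pd_eval_natCast]
  exact_mod_cast Int.alternating_sum_range_choose_eq_choose

theorem stmt5 (d : ℕ) :
    (Pd d).natDegree = d ∧
    ∀ m : ℕ, m ≤ 2 * ((d + 2) / 2) - 1 →
      (Pd d).eval (m : ℝ) = 0 ∨ (Pd d).eval (m : ℝ) = 1 := by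
  refine ⟨natDegree_Pd d, fun m hm => ?_⟩
  rcases m with _ | n
  · exact Or.inr (by simpa using Pd_eval_zero d)
  rw [Pd_eval_natCast_add_one]
  rcases (by omega : n < d ∨ n = d ∧ d % 2 = 0) with hlt | ⟨rfl, heven⟩
  · exact Or.inl (by simp [Nat.choose_eq_zero_of_lt hlt])
  · exact Or.inr (by simp [(Nat.even_iff.mpr heven).neg_one_pow])
end

section
/- For m ≥ 2 and d ≥ 1, γ_m(d) ≥ m^{d−1}, where γ_m(d) is the maximum number of coordinates that a degree-d function f : [m]^n → {0,1} (Hamming scheme H(n,m)) can depend on, over all n. -/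
open MvPolynomial Finset

theorem stmt19 (m d : ℕ) (hm : 2 ≤ m) (hd : 1 ≤ d) :
    ∃ (n : ℕ) (f : (Fin n → Fin m) → Bool) (P : MvPolynomial (Fin n × Fin m) ℝ),
      P.totalDegree ≤ d ∧
      (∀ x : Fin n → Fin m,
        (if f x then (1 : ℝ) else 0)
          = MvPolynomial.eval (fun p => if x p.1 = p.2 then (1 : ℝ) else 0) P) ∧
      ∃ T : Finset (Fin n), m ^ (d - 1) ≤ T.card ∧
        ∀ i ∈ T, ∃ y z : Fin n → Fin m, (∀ t, t ≠ i → y t = z t) ∧ f y ≠ f z := by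
  set k := d - 1 with hk
  have hkd : k + 1 = d := by omega
  set n := k + m ^ k with hn
  let z0 : Fin m := ⟨0, by omega⟩
  let z1 : Fin m := ⟨1, by omega⟩
  have hz01 : z0 ≠ z1 := by simp [z0, z1, Fin.ext_iff]
  let e : Fin k → Fin n := fun j => finSumFinEquiv (Sum.inl j)
  let D : Fin (m ^ k) → Fin n := fun v => finSumFinEquiv (Sum.inr v)
  let enc : (Fin k → Fin m) ≃ Fin (m ^ k) := finFunctionFinEquiv
  let f : (Fin n → Fin m) → Bool :=
    fun x => decide (x (D (enc (fun j => x (e j)))) = z0)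
  let P : MvPolynomial (Fin n × Fin m) ℝ :=
    ∑ u : Fin k → Fin m, (∏ j, X (e j, u j)) * X (D (enc u), z0)
  refine ⟨n, f, P, ?_, ?_, ?_⟩
  · -- total degree
    refine le_trans (totalDegree_finset_sum _ _) ?_
    apply Finset.sup_le
    intro u _
    refine le_trans (totalDegree_mul _ _) ?_
    have h1 : (∏ j, (X (e j, u j) : MvPolynomial (Fin n × Fin m) ℝ)).totalDegree ≤ k := by
      refine le_trans (totalDegree_finset_prod _ _) ?_
      calc ∑ j : Fin k, (X (e j, u j) : MvPolynomial (Fin n × Fin m) ℝ).totalDegree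
          ≤ ∑ _j : Fin k, 1 := Finset.sum_le_sum (fun j _ => by simp [totalDegree_X])
        _ = k := by simp
    have h2 : (X (D (enc u), z0) : MvPolynomial (Fin n × Fin m) ℝ).totalDegree ≤ 1 := by
      simp [totalDegree_X]
    omega
  · -- evaluation
    intro x
    set s : Fin n × Fin m → ℝ := fun p => if x p.1 = p.2 then (1 : ℝ) else 0 with hs
    have heval : eval s P =
        ∑ u : Fin k → Fin m,
          (∏ j, if x (e j) = u j then (1 : ℝ) else 0) *
            (if x (D (enc u)) = z0 then (1 : ℝ) else 0) := by
      simp [P, s]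
    rw [heval]
    set a : Fin k → Fin m := fun j => x (e j) with ha
    have hprod : ∀ u : Fin k → Fin m,
        (∏ j, if x (e j) = u j then (1 : ℝ) else 0) = if u = a then 1 else 0 := by
      intro u
      by_cases h : u = a
      · subst h
        simp [ha]
      · rw [if_neg h]
        obtain ⟨j, hj⟩ : ∃ j, u j ≠ a j := by
          by_contra hc
          push_neg at hc
          exact h (funext hc)
        refine Finset.prod_eq_zero (Finset.mem_univ j) ?_
        rw [if_neg]
        intro hx
        exact hj hx.symm
    have : ∑ u : Fin k → Fin m,
          (∏ j, if x (e j) = u j then (1 : ℝ) else 0) *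
            (if x (D (enc u)) = z0 then (1 : ℝ) else 0)
        = if x (D (enc a)) = z0 then (1 : ℝ) else 0 := by
      rw [Finset.sum_congr rfl (fun u _ => by rw [hprod u])]
      simp only [ite_mul, one_mul, zero_mul, Finset.sum_ite_eq', Finset.mem_univ, if_true]
    rw [this]
    simp only [f, ha]
    by_cases h : x (D (enc fun j => x (e j))) = z0 <;> simp [h]
  · -- dependence on m^(d-1) coordinates
    refine ⟨Finset.image D Finset.univ, ?_, ?_⟩
    · have hinj : Function.Injective D :=
        fun a b hab => Sum.inr_injective (finSumFinEquiv.injective hab)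
      rw [Finset.card_image_of_injective _ hinj, Finset.card_univ, Fintype.card_fin]
    · intro i hi
      obtain ⟨u, _, hu⟩ := Finset.mem_image.mp hi
      let a : Fin k → Fin m := enc.symm u
      let y : Fin n → Fin m :=
        fun t => Sum.elim a (fun _ => z0) (finSumFinEquiv.symm t)
      let z : Fin n → Fin m :=
        fun t => Sum.elim a (fun v => if v = u then z1 else z0) (finSumFinEquiv.symm t)
      have hye : ∀ j, y (e j) = a j := by
        intro j; simp [y, e]
      have hze : ∀ j, z (e j) = a j := by
        intro j; simp [z, e]
      have hyD : y (D u) = z0 := by simp [y, D]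
      have hzD : z (D u) = z1 := by simp [z, D]
      refine ⟨y, z, ?_, ?_⟩
      · intro t ht
        simp only [y, z]
        cases hcase : finSumFinEquiv.symm t with
        | inl j => simp
        | inr v =>
            have hvu : v ≠ u := by
              intro hvu
              apply ht
              rw [← hu]
              have : t = finSumFinEquiv (Sum.inr v) := by
                rw [← hcase, Equiv.apply_symm_apply]
              rw [this, hvu]
            simp [hvu]
      · have hay : (fun j => y (e j)) = a := funext hye
        have haz : (fun j => z (e j)) = a := funext hze
        have hea : enc a = u := Equiv.apply_symm_apply enc u
        simp only [f, hay, haz, hea, hyD, hzD]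
        simp [hz01, (hz01.symm : z1 ≠ z0)]
end
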